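/- arXiv:0806.4949 — 2 statements merged into one kernel-verified Lean document; each statement's English description precedes it below -/
import Mathlib

section
/- A DMV-algebra (divisible MV-algebra) has the same congruences as its MV-algebra reduct: for every DMV-algebra A, the lattice of DMV-congruences of A equals the lattice of MV-congruences of A. -/
/-- The operations of an MV-algebra ⟨A, ∧, ∨, ⊙, →, 0, 1⟩. -/
structure MVOps (α : Type*) where
  meet : α → α → α
  join : α → α → α
  odot : α → α → α
  impl : α → α → α
  zero : α
  one : α

namespace MVOps
variable {α : Type*}
/-- Negation ¬x = x → 0. -/
def neg (M : MVOps α) (x : α) : α := M.impl x M.zero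
/-- x ⊕ y = ¬(¬x ⊙ ¬y). -/
def oplus (M : MVOps α) (x y : α) : α := M.neg (M.odot (M.neg x) (M.neg y))
/-- n-fold ⊕-sum: 0·x = 0, (n+1)·x = n·x ⊕ x. -/
def nsum (M : MVOps α) : ℕ → α → α
  | 0, _ => M.zero
  | n + 1, x => M.oplus (M.nsum n x) x
end MVOps

/-- The MV-algebra axioms. -/
structure IsMVAlgebra {α : Type*} (M : MVOps α) : Prop where
  odot_comm : ∀ x y, M.odot x y = M.odot y x
  odot_assoc : ∀ x y z, M.odot (M.odot x y) z = M.odot x (M.odot y z)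
  odot_one : ∀ x, M.odot x M.one = x
  meet_comm : ∀ x y, M.meet x y = M.meet y x
  meet_assoc : ∀ x y z, M.meet (M.meet x y) z = M.meet x (M.meet y z)
  join_comm : ∀ x y, M.join x y = M.join y x
  join_assoc : ∀ x y z, M.join (M.join x y) z = M.join x (M.join y z)
  absorb_join_meet : ∀ x y, M.join x (M.meet x y) = x
  absorb_meet_join : ∀ x y, M.meet x (M.join x y) = x
  meet_one : ∀ x, M.meet x M.one = x
  join_zero : ∀ x, M.join x M.zero = x
  impl_odot : ∀ x y z, M.impl (M.odot x y) z = M.impl x (M.impl y z)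
  ax4 : ∀ x y, M.meet (M.odot (M.impl x y) x) y = M.odot (M.impl x y) x
  ax5 : ∀ x y, M.impl (M.meet x y) y = M.one
  ax6 : ∀ x y, M.odot x (M.impl x y) = M.meet x y
  ax7 : ∀ x y, M.join (M.impl x y) (M.impl y x) = M.one
  ax8 : ∀ x, M.impl (M.impl x M.zero) M.zero = x

/-- An MV-congruence: an equivalence relation compatible with all MV-operations. -/
def IsMVCong {α : Type*} (M : MVOps α) (r : α → α → Prop) : Prop :=
  Equivalence r ∧
  (∀ a b c d, r a b → r c d → r (M.meet a c) (M.meet b d)) ∧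
  (∀ a b c d, r a b → r c d → r (M.join a c) (M.join b d)) ∧
  (∀ a b c d, r a b → r c d → r (M.odot a c) (M.odot b d)) ∧
  (∀ a b c d, r a b → r c d → r (M.impl a c) (M.impl b d))

/-- Simplicity: nontrivial and the only congruences are the identity and the full one. -/
def IsSimpleMV {α : Type*} (M : MVOps α) : Prop :=
  Nontrivial α ∧ ∀ r : α → α → Prop, IsMVCong M r →
    (∀ x y, r x y ↔ x = y) ∨ (∀ x y, r x y)

/-- An MV-homomorphism. -/
structure IsMVHom {α : Type*} {β : Type*} (M : MVOps α) (N : MVOps β) (f : α → β) : Prop where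
  map_zero : f M.zero = N.zero
  map_one : f M.one = N.one
  map_meet : ∀ x y, f (M.meet x y) = N.meet (f x) (f y)
  map_join : ∀ x y, f (M.join x y) = N.join (f x) (f y)
  map_odot : ∀ x y, f (M.odot x y) = N.odot (f x) (f y)
  map_impl : ∀ x y, f (M.impl x y) = N.impl (f x) (f y)

/-- The standard MV-algebra on [0,1]: x⊙y = max(0, x+y−1), x→y = min(1, 1−x+y). -/
noncomputable def stdMV : MVOps unitInterval where
  meet x y := min x y
  join x y := max x y
  odot x y := ⟨max 0 (x.1 + y.1 - 1),
    le_max_left _ _, max_le zero_le_one (by linarith [x.2.2, y.2.2])⟩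
  impl x y := ⟨min 1 (1 - x.1 + y.1),
    le_min zero_le_one (by linarith [x.2.2, y.2.1]), min_le_left _ _⟩
  zero := 0
  one := 1

/-- A subset of an MV-algebra closed under all MV-operations. -/
structure IsMVSubalg {α : Type*} (M : MVOps α) (S : Set α) : Prop where
  zero_mem : M.zero ∈ S
  one_mem : M.one ∈ S
  meet_mem : ∀ x ∈ S, ∀ y ∈ S, M.meet x y ∈ S
  join_mem : ∀ x ∈ S, ∀ y ∈ S, M.join x y ∈ S
  odot_mem : ∀ x ∈ S, ∀ y ∈ S, M.odot x y ∈ S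
  impl_mem : ∀ x ∈ S, ∀ y ∈ S, M.impl x y ∈ S

/-- The MV-operations restricted to a subalgebra. -/
def MVOps.restrict {α : Type*} (M : MVOps α) (S : Set α) (h : IsMVSubalg M S) : MVOps S where
  meet x y := ⟨M.meet x y, h.meet_mem _ x.2 _ y.2⟩
  join x y := ⟨M.join x y, h.join_mem _ x.2 _ y.2⟩
  odot x y := ⟨M.odot x y, h.odot_mem _ x.2 _ y.2⟩
  impl x y := ⟨M.impl x y, h.impl_mem _ x.2 _ y.2⟩
  zero := ⟨M.zero, h.zero_mem⟩
  one := ⟨M.one, h.one_mem⟩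

/-- A DMV-algebra: an MV-algebra with division operations δ_n (n ≥ 1) satisfying
n·δ_n(x) = x and δ_n(x) ⊙ (n−1)·δ_n(x) = 0. -/
def IsDMVAlgebra {α : Type*} (M : MVOps α) (δ : ℕ → α → α) : Prop :=
  IsMVAlgebra M ∧
  ∀ n : ℕ, 1 ≤ n → ∀ x,
    M.nsum n (δ n x) = x ∧ M.odot (δ n x) (M.nsum (n - 1) (δ n x)) = M.zero

/-- A DMV-congruence: an MV-congruence also compatible with each δ_n. -/
def IsDMVCong {α : Type*} (M : MVOps α) (δ : ℕ → α → α) (r : α → α → Prop) : Prop :=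
  IsMVCong M r ∧ ∀ n : ℕ, 1 ≤ n → ∀ a b, r a b → r (δ n a) (δ n b)

namespace MVAux

variable {α : Type*} {M : MVOps α}

/-- order -/
def mle (M : MVOps α) (x y : α) : Prop := M.impl x y = M.one

theorem nsum_zero' (x : α) : M.nsum 0 x = M.zero := rfl
theorem nsum_succ (n : ℕ) (x : α) : M.nsum (n+1) x = M.oplus (M.nsum n x) x := rfl
theorem neg_def (x : α) : M.neg x = M.impl x M.zero := rfl
theorem oplus_def (a b : α) : M.oplus a b = M.neg (M.odot (M.neg a) (M.neg b)) := rfl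

theorem meet_idem (hM : IsMVAlgebra M) (x : α) : M.meet x x = x := by
  have h := hM.absorb_meet_join x (M.meet x x)
  rw [hM.absorb_join_meet x x] at h
  exact h

theorem join_idem (hM : IsMVAlgebra M) (x : α) : M.join x x = x := by
  have h := hM.absorb_join_meet x (M.join x x)
  rw [hM.absorb_meet_join x x] at h
  exact h

theorem meet_eq_iff_join (hM : IsMVAlgebra M) (x y : α) :
    M.meet x y = x ↔ M.join x y = y := by
  constructor
  · intro h
    have h2 := hM.absorb_join_meet y x
    rw [← hM.meet_comm x y, h] at h2
    rw [hM.join_comm x y]; exact h2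
  · intro h
    have h2 := hM.absorb_meet_join x y
    rw [h] at h2; exact h2

theorem mle_iff_meet (hM : IsMVAlgebra M) (x y : α) :
    mle M x y ↔ M.meet x y = x := by
  constructor
  · intro h
    have h2 := hM.ax6 x y
    rw [h, hM.odot_one] at h2
    exact h2.symm
  · intro h
    show M.impl x y = M.one
    conv_lhs => rw [← h]
    exact hM.ax5 x y

theorem mle_iff_join (hM : IsMVAlgebra M) (x y : α) :
    mle M x y ↔ M.join x y = y :=
  (mle_iff_meet hM x y).trans (meet_eq_iff_join hM x y)

theorem mle_refl (hM : IsMVAlgebra M) (x : α) : mle M x x := by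
  have h := hM.ax5 x x
  rwa [meet_idem hM] at h

theorem mle_trans (hM : IsMVAlgebra M) {x y z : α}
    (h1 : mle M x y) (h2 : mle M y z) : mle M x z := by
  rw [mle_iff_meet hM] at h1 h2 ⊢
  conv_lhs => rw [← h1]
  rw [hM.meet_assoc, h2, h1]

theorem mle_antisymm (hM : IsMVAlgebra M) {x y : α}
    (h1 : mle M x y) (h2 : mle M y x) : x = y := by
  rw [mle_iff_meet hM] at h1 h2
  rw [← h1, hM.meet_comm, h2]

theorem mle_top (hM : IsMVAlgebra M) (x : α) : mle M x M.one := by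
  have h := hM.ax5 x M.one
  rwa [hM.meet_one] at h

theorem mle_odot_iff (hM : IsMVAlgebra M) (x y z : α) :
    mle M (M.odot x y) z ↔ mle M x (M.impl y z) := by
  unfold mle
  rw [hM.impl_odot]

theorem meet_le_right (hM : IsMVAlgebra M) (x y : α) : mle M (M.meet x y) y :=
  hM.ax5 x y

theorem meet_le_left (hM : IsMVAlgebra M) (x y : α) : mle M (M.meet x y) x := by
  have h := hM.ax5 y x
  rwa [hM.meet_comm y x] at h

theorem le_meet (hM : IsMVAlgebra M) {x y z : α}
    (hx : mle M z x) (hy : mle M z y) : mle M z (M.meet x y) := by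
  rw [mle_iff_meet hM] at hx hy ⊢
  rw [← hM.meet_assoc, hx, hy]

theorem le_join_left (hM : IsMVAlgebra M) (x y : α) : mle M x (M.join x y) := by
  rw [mle_iff_meet hM]
  exact hM.absorb_meet_join x y

theorem le_join_right (hM : IsMVAlgebra M) (x y : α) : mle M y (M.join x y) := by
  rw [hM.join_comm]
  exact le_join_left hM y x

theorem join_le (hM : IsMVAlgebra M) {x y z : α}
    (hx : mle M x z) (hy : mle M y z) : mle M (M.join x y) z := by
  rw [mle_iff_join hM] at hx hy ⊢
  rw [hM.join_assoc, hy, hx]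

theorem neg_neg (hM : IsMVAlgebra M) (x : α) : M.neg (M.neg x) = x := hM.ax8 x

theorem impl_eq (hM : IsMVAlgebra M) (a b : α) :
    M.impl a b = M.neg (M.odot a (M.neg b)) := by
  rw [neg_def, hM.impl_odot, ← neg_def, neg_neg hM]

theorem contrapose (hM : IsMVAlgebra M) (a b : α) :
    M.impl a b = M.impl (M.neg b) (M.neg a) := by
  rw [impl_eq hM (M.neg b) (M.neg a), neg_neg hM, hM.odot_comm, ← impl_eq hM]

theorem neg_zero (hM : IsMVAlgebra M) : M.neg M.zero = M.one := mle_refl hM M.zero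

theorem neg_one (hM : IsMVAlgebra M) : M.neg M.one = M.zero := by
  rw [← neg_zero hM, neg_neg hM]

theorem mle_bot (hM : IsMVAlgebra M) (x : α) : mle M M.zero x := by
  show M.impl M.zero x = M.one
  rw [contrapose hM, neg_zero hM]
  exact mle_top hM (M.neg x)

theorem le_zero_eq (hM : IsMVAlgebra M) {x : α} (h : mle M x M.zero) : x = M.zero :=
  mle_antisymm hM h (mle_bot hM x)

theorem neg_antitone (hM : IsMVAlgebra M) {a b : α} (h : mle M a b) :
    mle M (M.neg b) (M.neg a) := by
  show M.impl (M.neg b) (M.neg a) = M.one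
  rw [← contrapose hM]
  exact h

theorem mle_neg_symm (hM : IsMVAlgebra M) {a b : α} (h : mle M a (M.neg b)) :
    mle M b (M.neg a) := by
  have h2 := neg_antitone hM h
  rwa [neg_neg hM] at h2

theorem mle_neg_left (hM : IsMVAlgebra M) {a b : α} (h : mle M (M.neg a) b) :
    mle M (M.neg b) a := by
  have h2 := neg_antitone hM h
  rwa [neg_neg hM] at h2

theorem odot_le_odot_left (hM : IsMVAlgebra M) {x y : α} (h : mle M x y) (z : α) :
    mle M (M.odot x z) (M.odot y z) := by
  rw [mle_odot_iff hM]
  exact mle_trans hM h ((mle_odot_iff hM _ _ _).mp (mle_refl hM (M.odot y z)))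

theorem odot_le_odot_right (hM : IsMVAlgebra M) {x y : α} (h : mle M x y) (z : α) :
    mle M (M.odot z x) (M.odot z y) := by
  rw [hM.odot_comm z x, hM.odot_comm z y]
  exact odot_le_odot_left hM h z

theorem odot_le_odot (hM : IsMVAlgebra M) {a b c d : α}
    (h1 : mle M a b) (h2 : mle M c d) : mle M (M.odot a c) (M.odot b d) :=
  mle_trans hM (odot_le_odot_left hM h1 c) (odot_le_odot_right hM h2 b)

theorem one_odot (hM : IsMVAlgebra M) (x : α) : M.odot M.one x = x := by
  rw [hM.odot_comm]; exact hM.odot_one x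

theorem odot_le_left (hM : IsMVAlgebra M) (x y : α) : mle M (M.odot x y) x := by
  have h := odot_le_odot_right hM (mle_top hM y) x
  rwa [hM.odot_one] at h

theorem odot_le_right (hM : IsMVAlgebra M) (x y : α) : mle M (M.odot x y) y := by
  rw [hM.odot_comm]; exact odot_le_left hM y x

theorem meet_zero (hM : IsMVAlgebra M) (x : α) : M.meet x M.zero = M.zero := by
  rw [hM.meet_comm]
  exact (mle_iff_meet hM _ _).mp (mle_bot hM x)

theorem odot_neg_self (hM : IsMVAlgebra M) (x : α) : M.odot x (M.neg x) = M.zero := by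
  rw [neg_def, hM.ax6, meet_zero hM]

theorem odot_zero (hM : IsMVAlgebra M) (x : α) : M.odot x M.zero = M.zero := by
  have h1 : M.neg (M.odot x M.zero) = M.one := by
    rw [neg_def, hM.impl_odot]
    rw [show M.impl M.zero M.zero = M.one from mle_refl hM M.zero]
    exact mle_top hM x
  have h2 := congrArg M.neg h1
  rwa [neg_neg hM, neg_one hM] at h2

theorem odot_join (hM : IsMVAlgebra M) (a b c : α) :
    M.odot (M.join a b) c = M.join (M.odot a c) (M.odot b c) := by
  apply mle_antisymm hM
  · rw [mle_odot_iff hM]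
    apply join_le hM
    · exact (mle_odot_iff hM _ _ _).mp (mle_trans hM (mle_refl hM _) (le_join_left hM (M.odot a c) (M.odot b c)))
    · exact (mle_odot_iff hM _ _ _).mp (mle_trans hM (mle_refl hM _) (le_join_right hM (M.odot a c) (M.odot b c)))
  · apply join_le hM
    · exact odot_le_odot_left hM (le_join_left hM a b) c
    · exact odot_le_odot_left hM (le_join_right hM a b) c

theorem odot_eq_zero_iff (hM : IsMVAlgebra M) (a b : α) :
    M.odot a b = M.zero ↔ mle M a (M.neg b) := by
  constructor
  · intro h
    have h2 : mle M (M.odot a b) M.zero := by rw [h]; exact mle_refl hM M.zero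
    exact (mle_odot_iff hM _ _ _).mp h2
  · intro h
    exact le_zero_eq hM ((mle_odot_iff hM _ _ _).mpr h)

end MVAux

namespace MVAux

variable {α : Type*} {M : MVOps α}

theorem neg_oplus (hM : IsMVAlgebra M) (a b : α) :
    M.neg (M.oplus a b) = M.odot (M.neg a) (M.neg b) := by
  rw [oplus_def, neg_neg hM]

theorem neg_odot (hM : IsMVAlgebra M) (a b : α) :
    M.neg (M.odot a b) = M.impl a (M.neg b) := by
  rw [neg_def, hM.impl_odot, ← neg_def]

theorem oplus_comm (hM : IsMVAlgebra M) (a b : α) : M.oplus a b = M.oplus b a := by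
  rw [oplus_def, oplus_def, hM.odot_comm]

theorem oplus_assoc (hM : IsMVAlgebra M) (a b c : α) :
    M.oplus (M.oplus a b) c = M.oplus a (M.oplus b c) := by
  rw [oplus_def, neg_oplus hM, hM.odot_assoc, ← neg_oplus hM, ← oplus_def]

theorem zero_oplus (hM : IsMVAlgebra M) (b : α) : M.oplus M.zero b = b := by
  rw [oplus_def, neg_zero hM, one_odot hM, neg_neg hM]

theorem oplus_zero (hM : IsMVAlgebra M) (b : α) : M.oplus b M.zero = b := by
  rw [oplus_comm hM]; exact zero_oplus hM b

theorem oplus_eq_impl_left (hM : IsMVAlgebra M) (a b : α) :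
    M.oplus a b = M.impl (M.neg a) b := by
  rw [impl_eq hM]; rfl

theorem oplus_eq_impl_right (hM : IsMVAlgebra M) (a b : α) :
    M.oplus a b = M.impl (M.neg b) a := by
  rw [oplus_comm hM]; exact oplus_eq_impl_left hM b a

theorem le_oplus_left (hM : IsMVAlgebra M) (a b : α) : mle M a (M.oplus a b) := by
  have h := neg_antitone hM (odot_le_left hM (M.neg a) (M.neg b))
  rwa [neg_neg hM] at h

theorem le_oplus_right (hM : IsMVAlgebra M) (a b : α) : mle M b (M.oplus a b) := by
  rw [oplus_comm hM]; exact le_oplus_left hM b a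

theorem oplus_le_oplus_left (hM : IsMVAlgebra M) {a a' : α} (h : mle M a a') (b : α) :
    mle M (M.oplus a b) (M.oplus a' b) := by
  have h3 := neg_antitone hM (odot_le_odot_left hM (neg_antitone hM h) (M.neg b))
  exact h3

theorem oplus_le_oplus_right (hM : IsMVAlgebra M) {b b' : α} (h : mle M b b') (a : α) :
    mle M (M.oplus a b) (M.oplus a b') := by
  rw [oplus_comm hM a b, oplus_comm hM a b']
  exact oplus_le_oplus_left hM h a

theorem exact_sub (hM : IsMVAlgebra M) {a b : α} (h : M.odot a b = M.zero) :
    M.odot (M.oplus a b) (M.neg b) = a := by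
  rw [oplus_eq_impl_right hM, hM.odot_comm, hM.ax6, hM.meet_comm]
  exact (mle_iff_meet hM _ _).mp ((odot_eq_zero_iff hM _ _).mp h)

theorem neg_meet (hM : IsMVAlgebra M) (a b : α) :
    M.neg (M.meet a b) = M.join (M.neg a) (M.neg b) := by
  apply mle_antisymm hM
  · apply mle_neg_left hM
    apply le_meet hM
    · exact mle_neg_left hM (le_join_left hM (M.neg a) (M.neg b))
    · exact mle_neg_left hM (le_join_right hM (M.neg a) (M.neg b))
  · apply join_le hM
    · exact neg_antitone hM (meet_le_left hM a b)
    · exact neg_antitone hM (meet_le_right hM a b)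

theorem or_impl (hM : IsMVAlgebra M) (x c : α) :
    M.impl c (M.odot x c) = M.join x (M.neg c) := by
  have hcc : M.impl x (M.neg c) = M.impl c (M.neg x) := by
    rw [contrapose hM x (M.neg c), neg_neg hM]
  rw [impl_eq hM, neg_odot hM x c, hcc, hM.ax6, neg_meet hM, neg_neg hM, hM.join_comm]

/-- F1 : (x ∧ y) ⊕ (x ⊙ ¬y) = x -/
theorem meet_oplus_diff (hM : IsMVAlgebra M) (x y : α) :
    M.oplus (M.meet x y) (M.odot x (M.neg y)) = x := by
  have hc : M.odot x (M.neg y) = M.neg (M.impl x y) := by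
    rw [impl_eq hM, neg_neg hM]
  rw [← hM.ax6 x y, hc, oplus_eq_impl_right hM, neg_neg hM, or_impl hM, ← hc,
    hM.join_comm]
  exact (mle_iff_join hM _ _).mp (odot_le_left hM x (M.neg y))

theorem prelin_cases (hM : IsMVAlgebra M) (x y : α) {t s : α}
    (h1 : mle M (M.odot (M.impl x y) t) s) (h2 : mle M (M.odot (M.impl y x) t) s) :
    mle M t s := by
  have key : M.join (M.odot (M.impl x y) t) (M.odot (M.impl y x) t) = t := by
    rw [← odot_join hM, hM.ax7, one_odot hM]
  have h := join_le hM h1 h2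
  rwa [key] at h

theorem case_bound (hM : IsMVAlgebra M) (x y z : α)
    (hz : mle M z (M.odot x (M.neg y))) :
    mle M (M.odot (M.impl x y) z) M.zero := by
  have s1 : mle M (M.odot (M.impl x y) z) (M.odot (M.impl x y) (M.odot x (M.neg y))) :=
    odot_le_odot_right hM hz _
  have s2 : M.odot (M.impl x y) (M.odot x (M.neg y)) = M.odot (M.meet x y) (M.neg y) := by
    rw [← hM.odot_assoc, hM.odot_comm (M.impl x y) x, hM.ax6]
  rw [s2] at s1
  have s3 : mle M (M.odot (M.meet x y) (M.neg y)) (M.odot y (M.neg y)) :=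
    odot_le_odot_left hM (meet_le_right hM x y) _
  have s4 := mle_trans hM s1 s3
  rwa [odot_neg_self hM] at s4

/-- F2 : (u ⊙ ¬v) ∧ (v ⊙ ¬u) = 0 -/
theorem diff_meet_diff (hM : IsMVAlgebra M) (u v : α) :
    M.meet (M.odot u (M.neg v)) (M.odot v (M.neg u)) = M.zero := by
  apply le_zero_eq hM
  apply prelin_cases hM u v
  · exact case_bound hM u v _ (meet_le_left hM _ _)
  · exact case_bound hM v u _ (meet_le_right hM _ _)

theorem oplus_shift (hM : IsMVAlgebra M) (a b c : α) :
    mle M (M.odot a (M.oplus b c)) (M.oplus (M.odot a b) c) := by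
  rw [oplus_eq_impl_left hM (M.odot a b) c, ← mle_odot_iff hM]
  have e1 : M.odot (M.odot a (M.oplus b c)) (M.neg (M.odot a b))
      = M.odot (M.oplus b c) (M.meet a (M.neg b)) := by
    rw [neg_odot hM, hM.odot_comm a (M.oplus b c), hM.odot_assoc, hM.ax6]
  rw [e1]
  have s2 : mle M (M.odot (M.oplus b c) (M.meet a (M.neg b)))
      (M.odot (M.oplus b c) (M.neg b)) :=
    odot_le_odot_right hM (meet_le_right hM _ _) _
  have e3 : M.odot (M.oplus b c) (M.neg b) = M.meet (M.neg b) c := by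
    rw [oplus_eq_impl_left hM b c, hM.odot_comm, hM.ax6]
  refine mle_trans hM s2 ?_
  rw [e3]
  exact meet_le_right hM _ _

/-- ∧ subdistributes over ⊕ -/
theorem meet_oplus_le (hM : IsMVAlgebra M) (x p q : α) :
    mle M (M.meet x (M.oplus p q)) (M.oplus (M.meet x p) (M.meet x q)) := by
  apply prelin_cases hM x p
  · -- case x → p
    have h1 : mle M (M.odot (M.impl x p) (M.meet x (M.oplus p q)))
        (M.odot (M.impl x p) x) := odot_le_odot_right hM (meet_le_left hM _ _) _
    have h2 : M.odot (M.impl x p) x = M.meet x p := by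
      rw [hM.odot_comm, hM.ax6]
    rw [h2] at h1
    exact mle_trans hM h1 (le_oplus_left hM _ _)
  · -- case p → x ; split again on x vs q
    apply prelin_cases hM x q
    · -- x → q
      have h1 : mle M (M.odot (M.impl x q) (M.odot (M.impl p x) (M.meet x (M.oplus p q))))
          (M.odot (M.impl x q) x) := by
        apply odot_le_odot_right hM
        exact mle_trans hM (odot_le_right hM _ _) (meet_le_left hM _ _)
      have h2 : M.odot (M.impl x q) x = M.meet x q := by
        rw [hM.odot_comm, hM.ax6]
      rw [h2] at h1
      exact mle_trans hM h1 (le_oplus_right hM _ _)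
    · -- q → x
      have h1 : mle M (M.odot (M.impl q x) (M.odot (M.impl p x) (M.meet x (M.oplus p q))))
          (M.odot (M.impl q x) (M.odot (M.impl p x) (M.oplus p q))) := by
        apply odot_le_odot_right hM
        exact odot_le_odot_right hM (meet_le_right hM _ _) _
      have h2 : mle M (M.odot (M.impl p x) (M.oplus p q))
          (M.oplus (M.meet p x) q) := by
        have h3 := oplus_shift hM (M.impl p x) p q
        rwa [hM.odot_comm (M.impl p x) p, hM.ax6] at h3
      have h4 : mle M (M.odot (M.impl q x) (M.odot (M.impl p x) (M.oplus p q)))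
          (M.odot (M.impl q x) (M.oplus q (M.meet p x))) := by
        apply odot_le_odot_right hM
        rw [oplus_comm hM q (M.meet p x)]
        exact h2
      have h5 : mle M (M.odot (M.impl q x) (M.oplus q (M.meet p x)))
          (M.oplus (M.odot (M.impl q x) q) (M.meet p x)) := oplus_shift hM _ _ _
      have h6 : M.oplus (M.odot (M.impl q x) q) (M.meet p x)
          = M.oplus (M.meet x p) (M.meet x q) := by
        rw [hM.odot_comm, hM.ax6, hM.meet_comm q x, hM.meet_comm p x, oplus_comm hM]
      rw [h6] at h5
      exact mle_trans hM h1 (mle_trans hM h4 h5)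

end MVAux

namespace MVAux

variable {α : Type*} {M : MVOps α}

theorem flip_zero (hM : IsMVAlgebra M) {x y : α} (h : M.odot x y = M.zero) :
    M.odot y x = M.zero := by rwa [hM.odot_comm]

/-- orthogonality shifting: a ⊥ b and (a⊕b) ⊥ c imply a ⊥ (b⊕c). -/
theorem orth_shift (hM : IsMVAlgebra M) {a b c : α}
    (h1 : M.odot a b = M.zero) (h2 : M.odot (M.oplus a b) c = M.zero) :
    M.odot a (M.oplus b c) = M.zero := by
  apply (odot_eq_zero_iff hM _ _).mpr
  rw [neg_oplus hM]
  have ha : a = M.odot (M.neg b) (M.oplus a b) := by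
    rw [hM.odot_comm]; exact (exact_sub hM h1).symm
  rw [ha]
  exact odot_le_odot_right hM ((odot_eq_zero_iff hM _ _).mp h2) _

/-- regrouping of orthogonal sums -/
theorem regroup (hM : IsMVAlgebra M) {w d A B : α}
    (hwd : M.odot w d = M.zero) (hAB : M.odot A B = M.zero)
    (h : M.odot (M.oplus w d) (M.oplus A B) = M.zero) :
    M.odot (M.oplus A w) (M.oplus B d) = M.zero := by
  have s2 : M.odot d (M.oplus w (M.oplus A B)) = M.zero := by
    apply orth_shift hM (flip_zero hM hwd)
    rwa [oplus_comm hM d w]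
  have s2' : mle M (M.oplus (M.oplus A w) B) (M.neg d) := by
    have h1 := mle_neg_symm hM ((odot_eq_zero_iff hM _ _).mp s2)
    have e : M.oplus w (M.oplus A B) = M.oplus (M.oplus A w) B := by
      rw [← oplus_assoc hM, oplus_comm hM w A]
    rwa [e] at h1
  have hABw : M.odot (M.oplus A B) w = M.zero := by
    apply (odot_eq_zero_iff hM _ _).mpr
    have h1 : mle M (M.oplus A B) (M.neg (M.oplus w d)) :=
      (odot_eq_zero_iff hM _ _).mp (flip_zero hM h)
    rw [neg_oplus hM] at h1
    exact mle_trans hM h1 (odot_le_left hM _ _)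
  have s3 : M.odot B (M.oplus A w) = M.zero := by
    apply orth_shift hM (flip_zero hM hAB)
    rwa [oplus_comm hM B A]
  have e : M.odot (M.neg B) (M.oplus (M.oplus A w) B) = M.oplus A w := by
    rw [hM.odot_comm]; exact exact_sub hM (flip_zero hM s3)
  have fin : mle M (M.oplus A w) (M.odot (M.neg B) (M.neg d)) := by
    rw [← e]
    exact odot_le_odot_right hM s2' _
  apply (odot_eq_zero_iff hM _ _).mpr
  rwa [neg_oplus hM]

theorem nsum_oplus (hM : IsMVAlgebra M) (n : ℕ) (a b : α) :
    M.nsum n (M.oplus a b) = M.oplus (M.nsum n a) (M.nsum n b) := by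
  induction n with
  | zero => rw [nsum_zero', nsum_zero', nsum_zero', zero_oplus hM]
  | succ k ih =>
    rw [nsum_succ, ih, nsum_succ, nsum_succ]
    rw [oplus_assoc hM (M.nsum k a) (M.nsum k b) (M.oplus a b),
      ← oplus_assoc hM (M.nsum k b) a b, oplus_comm hM (M.nsum k b) a,
      oplus_assoc hM a (M.nsum k b) b,
      ← oplus_assoc hM (M.nsum k a) a (M.oplus (M.nsum k b) b)]

theorem nsum_zero_elem (hM : IsMVAlgebra M) (n : ℕ) : M.nsum n M.zero = M.zero := by
  induction n with
  | zero => rfl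
  | succ k ih => rw [nsum_succ, ih, oplus_zero hM]

theorem le_nsum (hM : IsMVAlgebra M) (n : ℕ) (hn : 1 ≤ n) (x : α) :
    mle M x (M.nsum n x) := by
  obtain ⟨m, rfl⟩ : ∃ m, n = m + 1 := ⟨n - 1, by omega⟩
  rw [nsum_succ]
  exact le_oplus_right hM _ _

theorem meet_nsum (hM : IsMVAlgebra M) (x y : α) (n : ℕ) :
    mle M (M.meet x (M.nsum n y)) (M.nsum n (M.meet x y)) := by
  induction n with
  | zero =>
    rw [nsum_zero', nsum_zero', meet_zero hM]
    exact mle_refl hM _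
  | succ k ih =>
    rw [nsum_succ, nsum_succ]
    refine mle_trans hM (meet_oplus_le hM x (M.nsum k y) y) ?_
    exact oplus_le_oplus_left hM ih _

theorem pow_orth (hM : IsMVAlgebra M) (w d : α) (hwd : M.odot w d = M.zero) :
    ∀ m : ℕ, M.odot (M.oplus w d) (M.nsum m (M.oplus w d)) = M.zero →
      M.odot (M.nsum (m+1) w) (M.nsum (m+1) d) = M.zero := by
  intro m
  induction m with
  | zero =>
    intro _
    rw [nsum_succ, nsum_succ, nsum_zero', nsum_zero', zero_oplus hM, zero_oplus hM]
    exact hwd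
  | succ k ih =>
    intro h
    have step : mle M (M.nsum k (M.oplus w d)) (M.nsum (k+1) (M.oplus w d)) := by
      rw [nsum_succ]
      exact le_oplus_left hM _ _
    have hk : M.odot (M.oplus w d) (M.nsum k (M.oplus w d)) = M.zero := by
      have mono := odot_le_odot_right hM step (M.oplus w d)
      rw [h] at mono
      exact le_zero_eq hM mono
    have hAB := ih hk
    have h3 : M.odot (M.oplus w d) (M.oplus (M.nsum (k+1) w) (M.nsum (k+1) d)) = M.zero := by
      rw [← nsum_oplus hM]
      exact h
    have := regroup hM hwd hAB h3
    rw [nsum_succ (k+1) w, nsum_succ (k+1) d]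
    exact this

theorem cancel (hM : IsMVAlgebra M) {X Y Z : α}
    (h1 : M.odot X Y = M.zero) (h2 : M.odot X Z = M.zero)
    (h : M.oplus X Y = M.oplus X Z) : Y = Z := by
  have e1 := exact_sub hM (flip_zero hM h1)
  have e2 := exact_sub hM (flip_zero hM h2)
  rw [oplus_comm hM Y X] at e1
  rw [oplus_comm hM Z X] at e2
  rw [← e1, h, e2]

/-- Uniqueness of division by n in an MV-algebra. -/
theorem div_unique (hM : IsMVAlgebra M) (n : ℕ) (hn : 1 ≤ n) (u v : α)
    (h1 : M.nsum n u = M.nsum n v)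
    (h2 : M.odot u (M.nsum (n-1) u) = M.zero)
    (h3 : M.odot v (M.nsum (n-1) v) = M.zero) : u = v := by
  obtain ⟨m, rfl⟩ : ∃ m, n = m + 1 := ⟨n - 1, by omega⟩
  simp only [Nat.add_sub_cancel] at h2 h3
  have hu : M.oplus (M.meet u v) (M.odot u (M.neg v)) = u := meet_oplus_diff hM u v
  have hv : M.oplus (M.meet u v) (M.odot v (M.neg u)) = v := by
    have h := meet_oplus_diff hM v u
    rwa [hM.meet_comm v u] at h
  have hwd : M.odot (M.meet u v) (M.odot u (M.neg v)) = M.zero := by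
    have h := odot_le_odot hM (meet_le_right hM u v) (odot_le_right hM u (M.neg v))
    rw [odot_neg_self hM] at h
    exact le_zero_eq hM h
  have hwe : M.odot (M.meet u v) (M.odot v (M.neg u)) = M.zero := by
    have h := odot_le_odot hM (meet_le_left hM u v) (odot_le_right hM v (M.neg u))
    rw [odot_neg_self hM] at h
    exact le_zero_eq hM h
  have hOu : M.odot (M.nsum (m+1) (M.meet u v)) (M.nsum (m+1) (M.odot u (M.neg v))) = M.zero := by
    apply pow_orth hM _ _ hwd m
    rw [hu]; exact h2
  have hOv : M.odot (M.nsum (m+1) (M.meet u v)) (M.nsum (m+1) (M.odot v (M.neg u))) = M.zero := by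
    apply pow_orth hM _ _ hwe m
    rw [hv]; exact h3
  have hsum_u : M.nsum (m+1) u
      = M.oplus (M.nsum (m+1) (M.meet u v)) (M.nsum (m+1) (M.odot u (M.neg v))) := by
    conv_lhs => rw [← hu]
    rw [nsum_oplus hM]
  have hsum_v : M.nsum (m+1) v
      = M.oplus (M.nsum (m+1) (M.meet u v)) (M.nsum (m+1) (M.odot v (M.neg u))) := by
    conv_lhs => rw [← hv]
    rw [nsum_oplus hM]
  have hc : M.oplus (M.nsum (m+1) (M.meet u v)) (M.nsum (m+1) (M.odot u (M.neg v)))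
      = M.oplus (M.nsum (m+1) (M.meet u v)) (M.nsum (m+1) (M.odot v (M.neg u))) := by
    rw [← hsum_u, ← hsum_v]; exact h1
  have hde : M.nsum (m+1) (M.odot u (M.neg v)) = M.nsum (m+1) (M.odot v (M.neg u)) :=
    cancel hM hOu hOv hc
  have hd0 : M.odot u (M.neg v) = M.zero := by
    have l1 : mle M (M.odot u (M.neg v)) (M.nsum (m+1) (M.odot v (M.neg u))) := by
      have h := le_nsum hM (m+1) (by omega) (M.odot u (M.neg v))
      rwa [hde] at h
    have l3 : M.meet (M.odot u (M.neg v)) (M.nsum (m+1) (M.odot v (M.neg u)))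
        = M.odot u (M.neg v) := (mle_iff_meet hM _ _).mp l1
    have l2 := meet_nsum hM (M.odot u (M.neg v)) (M.odot v (M.neg u)) (m+1)
    rw [l3, diff_meet_diff hM u v, nsum_zero_elem hM] at l2
    exact le_zero_eq hM l2
  have he0 : M.odot v (M.neg u) = M.zero := by
    have l1 : mle M (M.odot v (M.neg u)) (M.nsum (m+1) (M.odot u (M.neg v))) := by
      have h := le_nsum hM (m+1) (by omega) (M.odot v (M.neg u))
      rwa [← hde] at h
    have l3 : M.meet (M.odot v (M.neg u)) (M.nsum (m+1) (M.odot u (M.neg v)))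
        = M.odot v (M.neg u) := (mle_iff_meet hM _ _).mp l1
    have l2 := meet_nsum hM (M.odot v (M.neg u)) (M.odot u (M.neg v)) (m+1)
    rw [l3, diff_meet_diff hM v u, nsum_zero_elem hM] at l2
    exact le_zero_eq hM l2
  rw [← hu, hd0, oplus_zero hM]
  conv_rhs => rw [← hv, he0, oplus_zero hM]

end MVAux

namespace MVAux

variable {α : Type*}

def congSetoid (r : α → α → Prop) (h : Equivalence r) : Setoid α := ⟨r, h⟩

def quotOps (M : MVOps α) {r : α → α → Prop} (hr : IsMVCong M r) :
    MVOps (Quotient (congSetoid r hr.1)) :=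
  letI s : Setoid α := congSetoid r hr.1
  { meet := Quotient.map₂ M.meet (by intro a b hab c d hcd; exact hr.2.1 a b c d hab hcd)
    join := Quotient.map₂ M.join (by intro a b hab c d hcd; exact hr.2.2.1 a b c d hab hcd)
    odot := Quotient.map₂ M.odot (by intro a b hab c d hcd; exact hr.2.2.2.1 a b c d hab hcd)
    impl := Quotient.map₂ M.impl (by intro a b hab c d hcd; exact hr.2.2.2.2 a b c d hab hcd)
    zero := Quotient.mk s M.zero
    one := Quotient.mk s M.one }

variable {M : MVOps α} {r : α → α → Prop}

theorem quot_mk_meet (hr : IsMVCong M r) (x y : α) :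
    (quotOps M hr).meet (Quotient.mk _ x) (Quotient.mk _ y) = Quotient.mk _ (M.meet x y) := rfl
theorem quot_mk_join (hr : IsMVCong M r) (x y : α) :
    (quotOps M hr).join (Quotient.mk _ x) (Quotient.mk _ y) = Quotient.mk _ (M.join x y) := rfl
theorem quot_mk_odot (hr : IsMVCong M r) (x y : α) :
    (quotOps M hr).odot (Quotient.mk _ x) (Quotient.mk _ y) = Quotient.mk _ (M.odot x y) := rfl
theorem quot_mk_impl (hr : IsMVCong M r) (x y : α) :
    (quotOps M hr).impl (Quotient.mk _ x) (Quotient.mk _ y) = Quotient.mk _ (M.impl x y) := rfl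

theorem quot_mk_oplus (hr : IsMVCong M r) (x y : α) :
    (quotOps M hr).oplus (Quotient.mk _ x) (Quotient.mk _ y) = Quotient.mk _ (M.oplus x y) := rfl

theorem quot_mk_nsum (hr : IsMVCong M r) (n : ℕ) (x : α) :
    (quotOps M hr).nsum n (Quotient.mk _ x) = Quotient.mk _ (M.nsum n x) := by
  induction n with
  | zero => rfl
  | succ k ih =>
    rw [nsum_succ, nsum_succ, ih, quot_mk_oplus]

theorem quotOps_isMV (hM : IsMVAlgebra M) (hr : IsMVCong M r) :
    IsMVAlgebra (quotOps M hr) where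
  odot_comm := fun x y => Quotient.inductionOn₂ x y fun a b =>
    congrArg (Quotient.mk _) (hM.odot_comm a b)
  odot_assoc := fun x y z => Quotient.inductionOn₃ x y z fun a b c =>
    congrArg (Quotient.mk _) (hM.odot_assoc a b c)
  odot_one := fun x => Quotient.inductionOn x fun a =>
    congrArg (Quotient.mk _) (hM.odot_one a)
  meet_comm := fun x y => Quotient.inductionOn₂ x y fun a b =>
    congrArg (Quotient.mk _) (hM.meet_comm a b)
  meet_assoc := fun x y z => Quotient.inductionOn₃ x y z fun a b c =>
    congrArg (Quotient.mk _) (hM.meet_assoc a b c)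
  join_comm := fun x y => Quotient.inductionOn₂ x y fun a b =>
    congrArg (Quotient.mk _) (hM.join_comm a b)
  join_assoc := fun x y z => Quotient.inductionOn₃ x y z fun a b c =>
    congrArg (Quotient.mk _) (hM.join_assoc a b c)
  absorb_join_meet := fun x y => Quotient.inductionOn₂ x y fun a b =>
    congrArg (Quotient.mk _) (hM.absorb_join_meet a b)
  absorb_meet_join := fun x y => Quotient.inductionOn₂ x y fun a b =>
    congrArg (Quotient.mk _) (hM.absorb_meet_join a b)
  meet_one := fun x => Quotient.inductionOn x fun a =>
    congrArg (Quotient.mk _) (hM.meet_one a)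
  join_zero := fun x => Quotient.inductionOn x fun a =>
    congrArg (Quotient.mk _) (hM.join_zero a)
  impl_odot := fun x y z => Quotient.inductionOn₃ x y z fun a b c =>
    congrArg (Quotient.mk _) (hM.impl_odot a b c)
  ax4 := fun x y => Quotient.inductionOn₂ x y fun a b =>
    congrArg (Quotient.mk _) (hM.ax4 a b)
  ax5 := fun x y => Quotient.inductionOn₂ x y fun a b =>
    congrArg (Quotient.mk _) (hM.ax5 a b)
  ax6 := fun x y => Quotient.inductionOn₂ x y fun a b =>
    congrArg (Quotient.mk _) (hM.ax6 a b)
  ax7 := fun x y => Quotient.inductionOn₂ x y fun a b =>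
    congrArg (Quotient.mk _) (hM.ax7 a b)
  ax8 := fun x => Quotient.inductionOn x fun a =>
    congrArg (Quotient.mk _) (hM.ax8 a)

end MVAux


/-- a DMV-algebra has the same congruences as its MV-reduct. -/
theorem dmv_congruences_eq_mv_congruences {α : Type*} (M : MVOps α) (δ : ℕ → α → α)
    (h : IsDMVAlgebra M δ) :
    {r : α → α → Prop | IsDMVCong M δ r} = {r : α → α → Prop | IsMVCong M r} := by
  ext r
  simp only [Set.mem_setOf_eq]
  constructor
  · exact fun hdr => hdr.1
  · intro hr
    refine ⟨hr, fun n hn a b hab => ?_⟩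
    have hM := h.1
    have hN := MVAux.quotOps_isMV hM hr
    have key : Quotient.mk (MVAux.congSetoid r hr.1) (δ n a)
        = Quotient.mk (MVAux.congSetoid r hr.1) (δ n b) := by
      apply MVAux.div_unique hN n hn
      · rw [MVAux.quot_mk_nsum hr, MVAux.quot_mk_nsum hr, (h.2 n hn a).1, (h.2 n hn b).1]
        exact Quot.sound hab
      · rw [MVAux.quot_mk_nsum hr, MVAux.quot_mk_odot hr, (h.2 n hn a).2]
        rfl
      · rw [MVAux.quot_mk_nsum hr, MVAux.quot_mk_odot hr, (h.2 n hn b).2]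
        rfl
    exact Quotient.exact key
end

section
/- The real unit interval [0,1] with Łukasiewicz MV-operations and δ_n(x) = x/n is a DMV-algebra, and these are the unique operations δ_n making [0,1]_MV into a DMV-algebra. -/
/-- Division by n on the unit interval: δ_n(x) = x / n. -/
noncomputable def stdDelta (n : ℕ) (x : unitInterval) : unitInterval :=
  ⟨x.1 / n, div_nonneg x.2.1 (Nat.cast_nonneg n), by
    rcases Nat.eq_zero_or_pos n with h | h
    · simp [h]
    · rw [div_le_one (by exact_mod_cast h)]
      calc (x.1 : ℝ) ≤ 1 := x.2.2
        _ ≤ n := by exact_mod_cast h⟩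

/-!
On `[0,1]` the `n`-fold Łukasiewicz sum is `min 1 (n·d)`, and `d ⊙ (n-1)·d = 0` says exactly that
`n·d ≤ 1`: if `(n-1)·d ≥ 1` it forces `d = 0`, otherwise it reads `d + (n-1)·d ≤ 1`. So the two
DMV-equations for `δ_n(x) = d` together say `n·d = x`, whose only solution is `x / n`. This gives
existence and uniqueness at once.
-/

namespace stdMV

lemma coe_odot (a b : unitInterval) : (stdMV.odot a b : ℝ) = max 0 ((a : ℝ) + b - 1) := rfl

lemma coe_oplus (a b : unitInterval) : (stdMV.oplus a b : ℝ) = min 1 ((a : ℝ) + b) := by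
  simp only [MVOps.oplus, MVOps.neg, stdMV, Set.Icc.coe_zero, add_zero]
  rw [min_eq_right (by linarith [a.2.1] : 1 - (a : ℝ) ≤ 1),
    min_eq_right (by linarith [b.2.1] : 1 - (b : ℝ) ≤ 1)]
  rcases le_total ((a : ℝ) + b) 1 with h | h
  · rw [max_eq_right (by linarith), min_eq_right h, min_eq_right (by linarith)]
    ring
  · rw [max_eq_left (by linarith), min_eq_left h]
    norm_num

lemma coe_nsum (n : ℕ) (x : unitInterval) : (stdMV.nsum n x : ℝ) = min 1 (n * (x : ℝ)) := by
  induction n with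
  | zero => simp [MVOps.nsum, stdMV]
  | succ m ih =>
    rw [MVOps.nsum, coe_oplus, ih]
    push_cast
    have := x.2.1
    rcases le_total ((m : ℝ) * x) 1 with h | h
    · rw [min_eq_right h, add_one_mul]
    · rw [min_eq_left h, min_eq_left (by linarith), min_eq_left (by nlinarith)]

theorem isMVAlgebra : IsMVAlgebra stdMV := by
  constructor <;>
  · intro x
    try intro y
    try intro z
    apply Subtype.ext
    simp only [stdMV, Set.Icc.coe_inf, Set.Icc.coe_sup, Set.Icc.coe_zero, Set.Icc.coe_one]
    simp only [min_def, max_def]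
    split_ifs <;>
      first
      | rfl
      | linarith [x.2.1, x.2.2, y.2.1, y.2.2, z.2.1, z.2.2]
      | linarith [x.2.1, x.2.2, y.2.1, y.2.2]
      | linarith [x.2.1, x.2.2]

lemma odot_nsum_eq_zero_iff (m : ℕ) (d : unitInterval) :
    stdMV.odot d (stdMV.nsum m d) = stdMV.zero ↔ ((m : ℝ) + 1) * d ≤ 1 := by
  rw [Subtype.ext_iff, coe_odot, coe_nsum, show (stdMV.zero : ℝ) = 0 from rfl,
    max_eq_left_iff]
  have := d.2.1
  rcases le_total ((m : ℝ) * d) 1 with h | h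
  · rw [min_eq_right h]
    constructor <;> intro <;> linarith
  · rw [min_eq_left h]
    constructor <;> intro <;> nlinarith

theorem isDivision_iff {n : ℕ} (hn : 1 ≤ n) (x d : unitInterval) :
    (stdMV.nsum n d = x ∧ stdMV.odot d (stdMV.nsum (n - 1) d) = stdMV.zero) ↔
      d = stdDelta n x := by
  obtain ⟨m, rfl⟩ := Nat.exists_eq_add_of_le' hn
  have hpos : (0 : ℝ) < (m + 1 : ℕ) := by positivity
  rw [Nat.add_sub_cancel, odot_nsum_eq_zero_iff, Subtype.ext_iff, Subtype.ext_iff, coe_nsum,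
    stdDelta, eq_div_iff hpos.ne', mul_comm (d : ℝ), Nat.cast_succ]
  constructor
  · rintro ⟨hsum, hle⟩
    rwa [min_eq_right hle] at hsum
  · intro h
    exact ⟨by rw [h, min_eq_right x.2.2], h ▸ x.2.2⟩

end stdMV

/-- [0,1] with δ_n(x) = x/n is a DMV-algebra, and these are the unique
operations making [0,1] a DMV-algebra. -/
theorem std_div_is_DMV_and_unique :
    IsDMVAlgebra stdMV stdDelta ∧
    ∀ δ : ℕ → unitInterval → unitInterval, IsDMVAlgebra stdMV δ →
      ∀ n : ℕ, 1 ≤ n → δ n = stdDelta n :=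
  ⟨⟨stdMV.isMVAlgebra, fun _ hn x => (stdMV.isDivision_iff hn x _).2 rfl⟩,
    fun _ hδ _ hn => funext fun x => (stdMV.isDivision_iff hn x _).1 (hδ.2 _ hn x)⟩
end
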